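/- arXiv:0901.4547 — 4 statements merged into one kernel-verified Lean document; each statement's English description precedes it below -/
import Mathlib

section
/- If A is a real normal n×n matrix all of whose complex eigenvalues have non-positive real part, then A + Aᵀ is negative semidefinite, and hence ‖exp(tA)x‖ is non-increasing in t for every x ∈ ℝⁿ. -/
/-!
For a normal element `a` of a C⋆-algebra, `a + a⋆` is the continuous functional calculus of `a`
applied to `z ↦ z + z̄ = 2 Re z`, which is nonpositive on the spectrum when the spectrum lies in
the closed left half-plane. Applied to the complexification of `A`, this makes
`A + Aᵀ` negative semidefinite. Along `y(t) = exp(tA) x` one has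
`d/dt ‖y‖² = ⟪y, (A + Aᵀ) y⟫ ≤ 0`.
-/

open Matrix
open scoped ComplexOrder

theorem add_star_nonpos_of_forall_re_nonpos {A : Type*} [CStarAlgebra A] [PartialOrder A]
    [StarOrderedRing A] (a : A) [IsStarNormal a] (h : ∀ z ∈ spectrum ℂ a, z.re ≤ 0) :
    a + star a ≤ 0 := by
  have hcfc : a + star a = cfc (fun z : ℂ => z + star z) a := by
    rw [cfc_add .., cfc_star, cfc_id' ℂ a]
  rw [hcfc]
  refine cfc_nonpos _ a fun z hz => ?_
  rw [Complex.star_def, Complex.add_conj]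
  exact_mod_cast mul_nonpos_of_nonneg_of_nonpos zero_le_two (h z hz)

theorem HasDerivAt.dotProduct {𝕜 ι : Type*} [NontriviallyNormedField 𝕜] [Fintype ι]
    {f g : 𝕜 → ι → 𝕜} {f' g' : ι → 𝕜} {t : 𝕜} (hf : HasDerivAt f f' t) (hg : HasDerivAt g g' t) :
    HasDerivAt (fun s => f s ⬝ᵥ g s) (f' ⬝ᵥ g t + f t ⬝ᵥ g') t := by
  have := HasDerivAt.fun_sum (u := Finset.univ) fun i _ =>
    (hasDerivAt_pi.1 hf i).mul (hasDerivAt_pi.1 hg i)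
  simp only [_root_.dotProduct, ← Finset.sum_add_distrib]
  exact this

namespace Matrix

variable {ι : Type*}

theorem conjTranspose_map_ofReal (A : Matrix ι ι ℝ) :
    (A.map ((↑) : ℝ → ℂ))ᴴ = Aᵀ.map ((↑) : ℝ → ℂ) := by
  ext i j
  simp

variable [Fintype ι]

theorem isStarNormal_map_ofReal {A : Matrix ι ι ℝ} (hA : A * Aᵀ = Aᵀ * A) :
    IsStarNormal (A.map ((↑) : ℝ → ℂ)) := by
  constructor
  rw [star_eq_conjTranspose, conjTranspose_map_ofReal]
  have := congrArg (Matrix.map · Complex.ofRealHom) hA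
  simp only [Matrix.map_mul] at this
  exact this.symm

theorem PosSemidef.of_map_ofReal {S : Matrix ι ι ℝ} (h : (S.map ((↑) : ℝ → ℂ)).PosSemidef) :
    S.PosSemidef := by
  refine posSemidef_iff_dotProduct_mulVec.mpr ⟨?_, fun x => ?_⟩
  · have := h.isHermitian
    rw [IsHermitian, conjTranspose_map_ofReal] at this
    exact Matrix.map_injective Complex.ofReal_injective this
  · have hx := h.dotProduct_mulVec_nonneg ((↑) ∘ x)
    rw [star_trivial]
    have hcast : star ((↑) ∘ x) ⬝ᵥ (S.map ((↑) : ℝ → ℂ) *ᵥ ((↑) ∘ x)) =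
        ((x ⬝ᵥ (S *ᵥ x) : ℝ) : ℂ) := by
      simp [dotProduct, mulVec]
    exact_mod_cast hcast ▸ hx

theorem dotProduct_add_transpose_mulVec {R : Type*} [CommSemiring R] (A : Matrix ι ι R)
    (x : ι → R) : x ⬝ᵥ ((A + Aᵀ) *ᵥ x) = (A *ᵥ x) ⬝ᵥ x + x ⬝ᵥ (A *ᵥ x) := by
  rw [add_mulVec, dotProduct_add, dotProduct_mulVec x Aᵀ, vecMul_transpose, add_comm]

variable [DecidableEq ι]

open scoped MatrixOrder Matrix.Norms.L2Operator in
theorem posSemidef_neg_add_conjTranspose {M : Matrix ι ι ℂ} [IsStarNormal M]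
    (h : ∀ z ∈ spectrum ℂ M, z.re ≤ 0) : (-(M + Mᴴ)).PosSemidef := by
  rw [← nonneg_iff_posSemidef, neg_nonneg]
  exact add_star_nonpos_of_forall_re_nonpos M h

theorem dotProduct_add_transpose_mulVec_nonpos {A : Matrix ι ι ℝ} (hA : A * Aᵀ = Aᵀ * A)
    (hspec : ∀ μ ∈ (A.map ((↑) : ℝ → ℂ)).charpoly.roots, μ.re ≤ 0) (x : ι → ℝ) :
    x ⬝ᵥ ((A + Aᵀ) *ᵥ x) ≤ 0 := by
  have := isStarNormal_map_ofReal hA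
  have hleft : ∀ z ∈ spectrum ℂ (A.map ((↑) : ℝ → ℂ)), z.re ≤ 0 := fun z hz =>
    hspec z <| (Polynomial.mem_roots (charpoly_monic _).ne_zero).2
      (mem_spectrum_iff_isRoot_charpoly.1 hz)
  have hpsd := posSemidef_neg_add_conjTranspose hleft
  have hmap : -(A.map ((↑) : ℝ → ℂ) + (A.map ((↑) : ℝ → ℂ))ᴴ) = (-(A + Aᵀ)).map (↑) := by
    ext i j
    simp
  rw [hmap] at hpsd
  have hx := hpsd.of_map_ofReal.dotProduct_mulVec_nonneg x
  rwa [star_trivial, neg_mulVec, dotProduct_neg, neg_nonneg] at hx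

theorem hasDerivAt_exp_smul_mulVec (A : Matrix ι ι ℝ) (x : ι → ℝ) (t : ℝ) :
    HasDerivAt (fun s : ℝ => NormedSpace.exp (s • A) *ᵥ x)
      (A *ᵥ (NormedSpace.exp (t • A) *ᵥ x)) t := by
  -- any algebra norm serves to differentiate `exp`; all induce the product topology
  let : NormedRing (Matrix ι ι ℝ) := Matrix.linftyOpNormedRing
  let : NormedAlgebra ℝ (Matrix ι ι ℝ) := Matrix.linftyOpNormedAlgebra
  rw [mulVec_mulVec]
  exact (LinearMap.toContinuousLinearMap ((mulVecBilin ℝ ℝ).flip x)).hasFDerivAt.comp_hasDerivAt t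
    (hasDerivAt_exp_smul_const' A t)

theorem antitone_dotProduct_exp_smul_mulVec {A : Matrix ι ι ℝ}
    (hA : ∀ y, y ⬝ᵥ ((A + Aᵀ) *ᵥ y) ≤ 0) (x : ι → ℝ) :
    Antitone fun t : ℝ =>
      (NormedSpace.exp (t • A) *ᵥ x) ⬝ᵥ (NormedSpace.exp (t • A) *ᵥ x) := by
  have hderiv t :=
    (hasDerivAt_exp_smul_mulVec A x t).dotProduct (hasDerivAt_exp_smul_mulVec A x t)
  refine antitone_of_deriv_nonpos (fun t => (hderiv t).differentiableAt) fun t => ?_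
  rw [(hderiv t).deriv, ← dotProduct_add_transpose_mulVec]
  exact hA _

end Matrix

/-- If `A` is a real normal matrix whose complex eigenvalues all have non-positive
real part, then `A + Aᵀ` is negative semidefinite and `‖exp(tA)x‖` is
non-increasing in `t` for every `x`. -/
theorem normal_nonpos_spectrum_contractive (n : ℕ) (A : Matrix (Fin n) (Fin n) ℝ)
    (hnormal : A * Aᵀ = Aᵀ * A)
    (hspec : ∀ μ ∈ (A.map (Complex.ofReal ·)).charpoly.roots, μ.re ≤ 0) :
    (∀ x : Fin n → ℝ, x ⬝ᵥ ((A + Aᵀ).mulVec x) ≤ 0) ∧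
    (∀ x : Fin n → ℝ, Antitone fun t : ℝ =>
        Real.sqrt (((NormedSpace.exp (t • A)).mulVec x) ⬝ᵥ
          ((NormedSpace.exp (t • A)).mulVec x))) := by
  have hdissipative := dotProduct_add_transpose_mulVec_nonpos hnormal hspec
  exact ⟨hdissipative, fun x =>
    Real.sqrt_monotone.comp_antitone (antitone_dotProduct_exp_smul_mulVec hdissipative x)⟩
end

section
/- If a flow t ↦ exp(tA)x + (particular solution) generated by the affine ODE r'(t) = A r(t) + c on ℝⁿ leaves a compact set with nonempty interior invariant for all t ≥ 0, then every eigenvalue of A has non-positive real part. -/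
/-!
Let `μ` be an eigenvalue of `A` with `Re μ > 0` and eigenvector `v`. The real and imaginary parts
of `t ↦ exp (t μ) v` solve the homogeneous equation `u' = A u`. Adding a small multiple of such a
solution to a solution of the affine equation starting at an interior point of `K` gives another
solution starting in `K`; both stay in the bounded set `K` for `t ≥ 0`, so the homogeneous solution
is bounded on `[0, ∞)`. But `‖exp (t μ) v‖ = exp (t Re μ) ‖v‖` is unbounded.
-/

open Matrix Polynomial Bornology Set Filter Topology

theorem Matrix.exists_mulVec_eq_smul_of_isRoot_charpoly {n K : Type*} [Fintype n] [DecidableEq n]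
    [Field K] {M : Matrix n n K} {μ : K} (hμ : M.charpoly.IsRoot μ) :
    ∃ v ≠ 0, M *ᵥ v = μ • v := by
  obtain ⟨v, hv, hμv⟩ := exists_mulVec_eq_zero_iff.2 (M.eval_charpoly μ ▸ hμ.eq_zero)
  refine ⟨v, hv, ?_⟩
  rwa [sub_mulVec, sub_eq_zero, scalar_apply, ← smul_one_eq_diagonal, smul_mulVec, one_mulVec,
    eq_comm] at hμv

section LinearODE

variable {E : Type*} [NormedAddCommGroup E] [NormedSpace ℝ E]

theorem exists_hasDerivAt_clm_add_const [CompleteSpace E] (T : E →L[ℝ] E) (c x₀ : E) :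
    ∃ r : ℝ → E, r 0 = x₀ ∧ ∀ t, HasDerivAt r (T (r t) + c) t := by
  -- `NormedSpace.exp` is only available for normed `ℚ`-algebras.
  let : NormedAlgebra ℚ (E →L[ℝ] E) := NormedAlgebra.restrictScalars ℚ ℝ _
  let g : ℝ → E := fun s => NormedSpace.exp (-(s • T)) c
  have hg : Continuous g := by fun_prop
  -- variation of constants: `r t = exp (t T) (x₀ + ∫₀ᵗ exp (-s T) c ds)`
  refine ⟨fun t => NormedSpace.exp (t • T) (x₀ + ∫ s in (0 : ℝ)..t, g s), by simp, fun t => ?_⟩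
  have hexp : NormedSpace.exp (t • T) (g t) = c := by
    rw [← mul_apply_eq_comp, ← NormedSpace.exp_add_of_commute (Commute.neg_right rfl),
      add_neg_cancel, NormedSpace.exp_zero, one_apply_eq_self]
  exact ((hasDerivAt_exp_smul_const' T t).clm_apply
    ((hg.integral_hasStrictDerivAt 0 t).hasDerivAt.const_add x₀)).congr_deriv (by rw [hexp]; rfl)

theorem isBounded_image_Ici_of_invariant {T : E →L[ℝ] E} {c : E} {K : Set E} (hK : IsBounded K)
    (hinv : ∀ r : ℝ → E, (∀ t, HasDerivAt r (T (r t) + c) t) → r 0 ∈ K → ∀ t, 0 ≤ t → r t ∈ K)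
    {r₀ : ℝ → E} (hr₀ : ∀ t, HasDerivAt r₀ (T (r₀ t) + c) t) (hr₀K : r₀ 0 ∈ interior K)
    {u : ℝ → E} (hu : ∀ t, HasDerivAt u (T (u t)) t) : IsBounded (u '' Ici 0) := by
  have hnear : ∀ᶠ δ in 𝓝[>] (0 : ℝ), r₀ 0 + δ • u 0 ∈ K := by
    refine nhdsWithin_le_nhds (ContinuousAt.eventually_mem ?_ (mem_interior_iff_mem_nhds.1 ?_))
    · fun_prop
    · simpa using hr₀K
  obtain ⟨δ, hδK, hδ⟩ := (hnear.and self_mem_nhdsWithin).exists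
  have hperturbed : ∀ t, 0 ≤ t → r₀ t + δ • u t ∈ K := by
    refine hinv (fun t => r₀ t + δ • u t) (fun t => ?_) hδK
    exact ((hr₀ t).add ((hu t).const_smul δ)).congr_deriv (by rw [map_add, map_smul]; abel)
  have hr₀K' : ∀ t, 0 ≤ t → r₀ t ∈ K := hinv r₀ hr₀ (interior_subset hr₀K)
  -- `u t = δ⁻¹ • ((r₀ t + δ • u t) - r₀ t)`
  refine ((isBounded_sub hK hK).smul₀ δ⁻¹).subset ?_
  rintro _ ⟨t, ht, rfl⟩
  refine ⟨_, Set.sub_mem_sub (hperturbed t ht) (hr₀K' t ht), ?_⟩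
  simp [smul_smul, inv_mul_cancel₀ (hδ.ne')]

end LinearODE

theorem hasDerivAt_cexp_mul_smul {V : Type*} [NormedAddCommGroup V] [NormedSpace ℂ V]
    {L : V →ₗ[ℂ] V} {μ : ℂ} {v : V} (hv : L v = μ • v) (t : ℝ) :
    HasDerivAt (fun s : ℝ => Complex.exp (s * μ) • v) (L (Complex.exp (t * μ) • v)) t := by
  have hexp : HasDerivAt (fun s : ℝ => Complex.exp (s * μ)) (Complex.exp (t * μ) * μ) t := by
    simpa using ((hasDerivAt_id (t : ℂ)).mul_const μ).cexp.comp_ofReal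
  refine (hexp.smul_const v).congr_deriv ?_
  rw [map_smul, hv, smul_smul]

theorem Matrix.apply_map_ofReal_mulVec {n : Type*} [Fintype n] (A : Matrix n n ℝ) (φ : ℂ →L[ℝ] ℝ)
    (z : n → ℂ) (j : n) : φ (((A.map Complex.ofReal) *ᵥ z) j) = (A *ᵥ fun k => φ (z k)) j := by
  simp only [mulVec, dotProduct, map_apply, ← Complex.real_smul, map_sum, map_smul, smul_eq_mul]

theorem hasDerivAt_comp_of_hasDerivAt_map_ofReal_mulVec {n : Type*} [Fintype n]
    {A : Matrix n n ℝ} {w : ℝ → n → ℂ} (hw : ∀ t, HasDerivAt w ((A.map Complex.ofReal) *ᵥ w t) t)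
    (φ : ℂ →L[ℝ] ℝ) (t : ℝ) :
    HasDerivAt (fun s j => φ (w s j)) (A *ᵥ fun j => φ (w t j)) t := by
  refine hasDerivAt_pi.2 fun j => ?_
  rw [← Matrix.apply_map_ofReal_mulVec]
  exact φ.hasFDerivAt.comp_hasDerivAt t (hasDerivAt_pi.1 (hw t) j)

theorem isBounded_image_of_re_of_im {α n : Type*} [Fintype n] {w : α → n → ℂ} {s : Set α}
    (hre : IsBounded ((fun a j => (w a j).re) '' s))
    (him : IsBounded ((fun a j => (w a j).im) '' s)) : IsBounded (w '' s) := by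
  have hsplit (z : n → ℂ) : ‖z‖ ≤ ‖fun j => (z j).re‖ + ‖fun j => (z j).im‖ :=
    (pi_norm_le_iff_of_nonneg (by positivity)).2 fun j => (Complex.norm_le_abs_re_add_abs_im _).trans
      (add_le_add (norm_le_pi_norm (fun j => (z j).re) j) (norm_le_pi_norm (fun j => (z j).im) j))
  obtain ⟨C, hC⟩ := hre.exists_norm_le
  obtain ⟨D, hD⟩ := him.exists_norm_le
  refine isBounded_iff_forall_norm_le.2 ⟨C + D, ?_⟩
  rintro _ ⟨a, ha, rfl⟩
  exact (hsplit (w a)).trans (add_le_add (hC _ ⟨a, ha, rfl⟩) (hD _ ⟨a, ha, rfl⟩))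

theorem not_isBounded_image_Ici_cexp_mul_smul {V : Type*} [NormedAddCommGroup V] [NormedSpace ℂ V]
    {μ : ℂ} (hμ : 0 < μ.re) {v : V} (hv : v ≠ 0) :
    ¬ IsBounded ((fun t : ℝ => Complex.exp (t * μ) • v) '' Ici 0) := by
  intro hbdd
  obtain ⟨C, hC⟩ := hbdd.exists_norm_le
  have hgrowth : Tendsto (fun t : ℝ => Real.exp (t * μ.re) * ‖v‖) atTop atTop :=
    (Real.tendsto_exp_atTop.comp (tendsto_id.atTop_mul_const hμ)).atTop_mul_const (norm_pos_iff.2 hv)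
  obtain ⟨t, ht, hCt⟩ := ((eventually_ge_atTop 0).and (hgrowth.eventually_gt_atTop C)).exists
  refine (hC _ ⟨t, ht, rfl⟩).not_gt ?_
  simpa [norm_smul, Complex.norm_exp] using hCt

/-- If every solution of the affine ODE `r' = A r + c` starting in a compact set `K`
with nonempty interior remains in `K` for all `t ≥ 0`, then every (complex)
eigenvalue of `A` has non-positive real part. -/
theorem invariant_compact_implies_stable (n : ℕ) (A : Matrix (Fin n) (Fin n) ℝ)
    (c : Fin n → ℝ) (K : Set (Fin n → ℝ)) (hK : IsCompact K)
    (hint : (interior K).Nonempty)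
    (hinv : ∀ r : ℝ → (Fin n → ℝ),
      (∀ t : ℝ, HasDerivAt r (A.mulVec (r t) + c) t) →
      r 0 ∈ K → ∀ t : ℝ, 0 ≤ t → r t ∈ K) :
    ∀ μ ∈ (A.map (Complex.ofReal ·)).charpoly.roots, μ.re ≤ 0 := by
  intro μ hμ
  by_contra! hμre
  obtain ⟨v, hv0, hv⟩ := exists_mulVec_eq_smul_of_isRoot_charpoly (isRoot_of_mem_roots hμ)
  let w : ℝ → Fin n → ℂ := fun t => Complex.exp (t * μ) • v
  have hw : ∀ t : ℝ, HasDerivAt w ((A.map Complex.ofReal) *ᵥ w t) t :=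
    hasDerivAt_cexp_mul_smul (L := (A.map Complex.ofReal).mulVecLin) hv
  obtain ⟨x₀, hx₀⟩ := hint
  let T : (Fin n → ℝ) →L[ℝ] (Fin n → ℝ) := LinearMap.toContinuousLinearMap A.mulVecLin
  obtain ⟨r₀, rfl, hr₀⟩ := exists_hasDerivAt_clm_add_const T c x₀
  have hbdd (φ : ℂ →L[ℝ] ℝ) : IsBounded ((fun t j => φ (w t j)) '' Ici 0) :=
    isBounded_image_Ici_of_invariant hK.isBounded hinv hr₀ hx₀
      (hasDerivAt_comp_of_hasDerivAt_map_ofReal_mulVec hw φ)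
  exact not_isBounded_image_Ici_cexp_mul_smul hμre hv0
    (isBounded_image_of_re_of_im (hbdd Complex.reCLM) (hbdd Complex.imCLM))
end

section
/- Define the superoperator matrix A_V with entries a_{ℓj} = Tr(V†σ_ℓ V σ_j) − (1/2)Tr(V†V{σ_ℓ,σ_j}) with respect to an orthonormal basis {σ_j} of traceless Hermitian N×N matrices. If V is normal ([V,V†]=0), then A_V is a normal matrix: A_V A_Vᵀ = A_Vᵀ A_V. -/
/-!
In the orthonormal basis `σ`, `A_V` is the matrix of the Lindblad dissipator
`L_V X = V X V† - ½ {V†V, X}`, which maps traceless Hermitian matrices to themselves: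
`a_{ℓj} = Re Tr(σ_ℓ L_V σ_j)`. For normal `V` the Hilbert–Schmidt adjoint of `L_V` is `L_{V†}`,
and `L_V`, `L_{V†}` commute, so `L_V` is a normal operator and its matrix in an orthonormal
basis is a normal matrix.
-/

open Matrix

section Dissipator

variable {n : Type*} [Fintype n]

noncomputable def lindbladDissipator (V X : Matrix n n ℂ) : Matrix n n ℂ :=
  V * X * Vᴴ - (1 / 2 : ℂ) • (Vᴴ * V * X + X * (Vᴴ * V))

theorem trace_lindbladDissipator (V X : Matrix n n ℂ) : (lindbladDissipator V X).trace = 0 := by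
  rw [lindbladDissipator, trace_sub, trace_smul, trace_add, trace_mul_cycle, trace_mul_comm X]
  ring

theorem isHermitian_lindbladDissipator {X : Matrix n n ℂ} (hX : X.IsHermitian) (V : Matrix n n ℂ) :
    (lindbladDissipator V X).IsHermitian := by
  simp only [lindbladDissipator, IsHermitian, conjTranspose_sub, conjTranspose_smul,
    conjTranspose_add, conjTranspose_mul, conjTranspose_conjTranspose, hX.eq, Matrix.mul_assoc,
    add_comm (X * _)]
  norm_num

theorem re_trace_mul_lindbladDissipator (V X Y : Matrix n n ℂ) :
    (X * lindbladDissipator V Y).trace.re = (Vᴴ * X * V * Y).trace.re -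
      (1 / 2 : ℝ) * (Vᴴ * V * (X * Y + Y * X)).trace.re := by
  have h₁ : (X * (V * Y * Vᴴ)).trace = (Vᴴ * X * V * Y).trace := by
    rw [← Matrix.mul_assoc, trace_mul_comm, ← Matrix.mul_assoc, ← Matrix.mul_assoc]
  have h₂ : (X * (Vᴴ * V * Y)).trace = (Vᴴ * V * (Y * X)).trace := by
    rw [trace_mul_comm, Matrix.mul_assoc]
  have h₃ : (X * (Y * (Vᴴ * V))).trace = (Vᴴ * V * (X * Y)).trace := by
    rw [← Matrix.mul_assoc, trace_mul_comm]
  simp only [lindbladDissipator, mul_sub, mul_add, Matrix.mul_smul, trace_sub, trace_smul,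
    trace_add, h₁, h₂, h₃, Complex.sub_re, Complex.add_re, smul_eq_mul]
  norm_num
  ring

variable {V : Matrix n n ℂ}

theorem trace_mul_lindbladDissipator (hV : V * Vᴴ = Vᴴ * V) (X Y : Matrix n n ℂ) :
    (X * lindbladDissipator V Y).trace = (lindbladDissipator Vᴴ X * Y).trace := by
  have h₁ : (X * (V * Y * Vᴴ)).trace = (Vᴴ * X * V * Y).trace := by
    rw [← Matrix.mul_assoc, trace_mul_comm, ← Matrix.mul_assoc, ← Matrix.mul_assoc]
  have h₂ : (X * (Y * (Vᴴ * V))).trace = (Vᴴ * V * X * Y).trace := by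
    rw [← Matrix.mul_assoc, trace_mul_comm, ← Matrix.mul_assoc]
  simp only [lindbladDissipator, conjTranspose_conjTranspose, hV, sub_mul, mul_sub, add_mul,
    mul_add, Matrix.mul_smul, Matrix.smul_mul, trace_sub, trace_smul, trace_add]
  rw [h₁, h₂, Matrix.mul_assoc X]
  ring

theorem lindbladDissipator_comm_conjTranspose (hV : V * Vᴴ = Vᴴ * V) (Y : Matrix n n ℂ) :
    lindbladDissipator V (lindbladDissipator Vᴴ Y) =
      lindbladDissipator Vᴴ (lindbladDissipator V Y) := by
  simp only [lindbladDissipator, conjTranspose_conjTranspose, hV]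
  set W := Vᴴ * V with hW
  have hVW : V * W = W * V := by rw [hW, ← Matrix.mul_assoc, hV]
  have hUW : Vᴴ * W = W * Vᴴ :=
    calc Vᴴ * W = Vᴴ * (V * Vᴴ) := by rw [hV]
      _ = W * Vᴴ := (Matrix.mul_assoc _ _ _).symm
  -- normal form: products associated to the right, with `W` moved left past `V` and `Vᴴ`
  simp only [mul_sub, sub_mul, mul_add, add_mul, Matrix.mul_smul, Matrix.smul_mul,
    Matrix.mul_assoc, ← Matrix.mul_assoc V W, ← Matrix.mul_assoc Vᴴ W, hVW, hUW,
    ← Matrix.mul_assoc V Vᴴ, hV, ← Matrix.mul_assoc Vᴴ V, ← hW]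
  module

theorem trace_lindbladDissipator_conjTranspose_mul (hV : V * Vᴴ = Vᴴ * V) (X Y : Matrix n n ℂ) :
    (lindbladDissipator Vᴴ X * lindbladDissipator Vᴴ Y).trace =
      (lindbladDissipator V X * lindbladDissipator V Y).trace :=
  calc (lindbladDissipator Vᴴ X * lindbladDissipator Vᴴ Y).trace
      = (X * lindbladDissipator V (lindbladDissipator Vᴴ Y)).trace :=
        (trace_mul_lindbladDissipator hV _ _).symm
    _ = (lindbladDissipator Vᴴ (lindbladDissipator V Y) * X).trace := by
        rw [lindbladDissipator_comm_conjTranspose hV, trace_mul_comm]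
    _ = (lindbladDissipator V X * lindbladDissipator V Y).trace := by
        rw [← trace_mul_lindbladDissipator hV, trace_mul_comm]

end Dissipator

section OrthonormalExpansion

variable {n ι : Type*} [Fintype n] [Fintype ι] [DecidableEq ι] {σ : ι → Matrix n n ℂ}

theorem trace_mul_sum_smul (honb : ∀ j k, (σ j * σ k).trace = if j = k then 1 else 0)
    (c : ι → ℝ) (j : ι) : (σ j * ∑ i, c i • σ i).trace = c j := by
  simp [Finset.mul_sum, trace_sum, Matrix.mul_smul, trace_smul, honb]

theorem re_trace_mul_eq_sum_of_mem_span
    (honb : ∀ j k, (σ j * σ k).trace = if j = k then 1 else 0) {X Y : Matrix n n ℂ}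
    (hX : X ∈ Submodule.span ℝ (Set.range σ)) (hY : Y ∈ Submodule.span ℝ (Set.range σ)) :
    (X * Y).trace.re = ∑ j, (X * σ j).trace.re * (Y * σ j).trace.re := by
  obtain ⟨c, rfl⟩ := (Submodule.mem_span_range_iff_exists_fun ℝ).mp hX
  obtain ⟨d, rfl⟩ := (Submodule.mem_span_range_iff_exists_fun ℝ).mp hY
  have hcoeff (e : ι → ℝ) (j : ι) : ((∑ i, e i • σ i) * σ j).trace.re = e j := by
    rw [trace_mul_comm, trace_mul_sum_smul honb, Complex.ofReal_re]
  simp only [hcoeff]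
  simp only [Finset.sum_mul, trace_sum, Matrix.smul_mul, trace_smul, Complex.re_sum,
    Complex.real_smul, Complex.re_ofReal_mul, trace_mul_sum_smul honb, Complex.ofReal_re]

end OrthonormalExpansion

theorem bloch_superoperator_normal_of_normal_general (N : ℕ)
    (σ : Fin (N ^ 2 - 1) → Matrix (Fin N) (Fin N) ℂ)
    (hherm : ∀ j, (σ j).IsHermitian)
    (honb : ∀ j k, (σ j * σ k).trace = if j = k then 1 else 0)
    (hspan : ∀ M : Matrix (Fin N) (Fin N) ℂ, M.IsHermitian → M.trace = 0 →
      M ∈ Submodule.span ℝ (Set.range σ))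
    (V : Matrix (Fin N) (Fin N) ℂ) (hV : V * Vᴴ = Vᴴ * V)
    (AV : Matrix (Fin (N ^ 2 - 1)) (Fin (N ^ 2 - 1)) ℝ)
    (hAV : ∀ ℓ j, AV ℓ j = (Vᴴ * σ ℓ * V * σ j).trace.re -
      (1 / 2 : ℝ) * (Vᴴ * V * (σ ℓ * σ j + σ j * σ ℓ)).trace.re) :
    AV * AVᵀ = AVᵀ * AV := by
  have hmem (W : Matrix (Fin N) (Fin N) ℂ) (ℓ) :
      lindbladDissipator W (σ ℓ) ∈ Submodule.span ℝ (Set.range σ) :=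
    hspan _ (isHermitian_lindbladDissipator (hherm ℓ) W) (trace_lindbladDissipator W _)
  have hcol (ℓ j) : AV j ℓ = (lindbladDissipator V (σ ℓ) * σ j).trace.re := by
    rw [hAV, ← re_trace_mul_lindbladDissipator, trace_mul_comm]
  have hrow (ℓ j) : AV ℓ j = (lindbladDissipator Vᴴ (σ ℓ) * σ j).trace.re := by
    rw [hAV, ← re_trace_mul_lindbladDissipator, trace_mul_lindbladDissipator hV]
  ext ℓ k
  calc (AV * AVᵀ) ℓ k = ∑ j, AV ℓ j * AV k j := by simp only [mul_apply, transpose_apply]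
    _ = (lindbladDissipator Vᴴ (σ ℓ) * lindbladDissipator Vᴴ (σ k)).trace.re := by
      rw [re_trace_mul_eq_sum_of_mem_span honb (hmem _ ℓ) (hmem _ k)]
      simp only [hrow]
    _ = (lindbladDissipator V (σ ℓ) * lindbladDissipator V (σ k)).trace.re := by
      rw [trace_lindbladDissipator_conjTranspose_mul hV]
    _ = ∑ j, AV j ℓ * AV j k := by
      rw [re_trace_mul_eq_sum_of_mem_span honb (hmem _ ℓ) (hmem _ k)]
      simp only [hcol]
    _ = (AVᵀ * AV) ℓ k := by simp only [mul_apply, transpose_apply]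

/-- If `V` is normal, then the Bloch superoperator matrix `A_V` with entries
`a_{ℓj} = Tr(V†σ_ℓVσ_j) − (1/2)Tr(V†V{σ_ℓ,σ_j})` is a normal matrix. -/
theorem bloch_superoperator_normal_of_normal (N : ℕ)
    (σ : Fin (N ^ 2 - 1) → Matrix (Fin N) (Fin N) ℂ)
    (hherm : ∀ j, (σ j).IsHermitian) (htraceless : ∀ j, (σ j).trace = 0)
    (honb : ∀ j k, (σ j * σ k).trace = if j = k then 1 else 0)
    (hspan : ∀ M : Matrix (Fin N) (Fin N) ℂ, M.IsHermitian → M.trace = 0 →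
      M ∈ Submodule.span ℝ (Set.range σ))
    (V : Matrix (Fin N) (Fin N) ℂ) (hV : V * Vᴴ = Vᴴ * V)
    (AV : Matrix (Fin (N ^ 2 - 1)) (Fin (N ^ 2 - 1)) ℝ)
    (hAV : ∀ ℓ j, AV ℓ j = (Vᴴ * σ ℓ * V * σ j).trace.re -
      (1 / 2 : ℝ) * (Vᴴ * V * (σ ℓ * σ j + σ j * σ ℓ)).trace.re) :
    AV * AVᵀ = AVᵀ * AV :=
  bloch_superoperator_normal_of_normal_general N σ hherm honb hspan V hV AV hAV
end

section
/- The matrix ρ_ss = (1/5)·[[2,−1,0],[−1,2,−1],[0,−1,1]] is a density matrix (Hermitian, positive semidefinite, trace 1) and satisfies D[V](ρ_ss) = 0 for V the upper-triangular 3×3 matrix of all ones, V = [[1,1,1],[0,1,1],[0,0,1]]. -/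
/-!
The steady state is `ρ_ss = (1/5) (Vᴴ V)⁻¹`, and `1/5` is the reciprocal of the trace of
`(Vᴴ V)⁻¹ = [[2,−1,0],[−1,2,−1],[0,−1,1]]`. For invertible `V` and `ρ = (Vᴴ V)⁻¹`, each of
`V ρ Vᴴ`, `Vᴴ V ρ` and `ρ Vᴴ V` is the identity, so the dissipator vanishes; and
`(Vᴴ V)⁻¹ = V⁻¹ (V⁻¹)ᴴ` is positive semidefinite as a Gram matrix.
-/

open Matrix ComplexOrder

section Dissipator

variable {n K : Type*} [Fintype n] [DecidableEq n] [Field K] [StarRing K]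

def dissipator (V ρ : Matrix n n K) : Matrix n n K :=
  V * ρ * Vᴴ - (1 / 2 : K) • (Vᴴ * V * ρ + ρ * (Vᴴ * V))

theorem posSemidef_inv_conjTranspose_mul_self [PartialOrder K] [StarOrderedRing K]
    (V : Matrix n n K) : (Vᴴ * V)⁻¹.PosSemidef := by
  rw [Matrix.mul_inv_rev, ← conjTranspose_nonsing_inv]
  exact posSemidef_self_mul_conjTranspose V⁻¹

theorem dissipator_smul_inv_conjTranspose_mul_self_eq_zero [CharZero K] {V : Matrix n n K}
    (hV : IsUnit V.det) (c : K) : dissipator V (c • (Vᴴ * V)⁻¹) = 0 := by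
  have hVH : IsUnit Vᴴ.det := by rwa [det_conjTranspose, isUnit_star]
  have hgram : IsUnit (Vᴴ * V).det := by rw [det_mul]; exact hVH.mul hV
  have hsandwich : V * (Vᴴ * V)⁻¹ * Vᴴ = 1 := by
    rw [Matrix.mul_inv_rev, Matrix.mul_assoc, Matrix.mul_assoc, nonsing_inv_mul _ hVH, Matrix.mul_one,
      mul_nonsing_inv _ hV]
  simp only [dissipator, Matrix.mul_smul, Matrix.smul_mul, hsandwich, mul_nonsing_inv _ hgram,
    nonsing_inv_mul _ hgram, ← smul_add, smul_smul]
  module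

end Dissipator

/-- `ρ_ss = (1/5)·[[2,−1,0],[−1,2,−1],[0,−1,1]]` is a density matrix and is a steady
state of the dissipator `D[V]` for the upper-triangular all-ones `V`. -/
theorem steady_state_example :
    let V : Matrix (Fin 3) (Fin 3) ℂ := !![1, 1, 1; 0, 1, 1; 0, 0, 1]
    let ρ : Matrix (Fin 3) (Fin 3) ℂ :=
      (1 / 5 : ℂ) • !![2, -1, 0; -1, 2, -1; 0, -1, 1]
    ρ.PosSemidef ∧ ρ.trace = 1 ∧
      V * ρ * Vᴴ - (1 / 2 : ℂ) • (Vᴴ * V * ρ + ρ * (Vᴴ * V)) = 0 := by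
  intro V ρ
  have hdet : IsUnit V.det := by simp [V, det_fin_three]
  have hgram : Vᴴ * V = !![1, 1, 1; 1, 2, 2; 1, 2, 3] := by
    ext i j; fin_cases i <;> fin_cases j <;> simp [V, mul_apply, Fin.sum_univ_succ] <;> norm_num
  have hinv : (Vᴴ * V)⁻¹ = !![2, -1, 0; -1, 2, -1; 0, -1, 1] := by
    refine inv_eq_left_inv ?_
    rw [hgram]
    ext i j; fin_cases i <;> fin_cases j <;> simp [mul_apply, Fin.sum_univ_succ] <;> norm_num
  have hρ : ρ = (1 / 5 : ℂ) • (Vᴴ * V)⁻¹ := by rw [hinv]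
  refine ⟨?_, ?_, ?_⟩
  · rw [hρ]
    exact (posSemidef_inv_conjTranspose_mul_self V).smul (by rw [Complex.nonneg_iff]; norm_num)
  · simp [ρ, trace_fin_three]
    norm_num
  · show dissipator V ρ = 0
    rw [hρ]
    exact dissipator_smul_inv_conjTranspose_mul_self_eq_zero hdet _
end
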